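/- arXiv:2406.19496 — 2 statements merged into one kernel-verified Lean document; each statement's English description precedes it below -/
import Mathlib

section
/- Let u : ℝ × ℝ × ℝ → ℝ, written u(x,y,t), be infinitely differentiable and satisfy the wave equation ∂_t²u = c²Δu everywhere. Define the Neumann boundary traces g₁(x,t) = ∂_y u(x,0,t) and g₂(y,t) = ∂_x u(0,y,t). Then for all natural numbers q and α and all t, the Neumann–Neumann corner compatibility conditions hold at the corner (0,0): ∂_t^{2q} ∂_x^α g₁(0,t) = c^{2q} Σ_{j=0}^{q} C(q,j) ∂_x^{2(q−j)+α} ∂_y^{2j+1} u(0,0,t), and ∂_t^{2q} ∂_y^α g₂(0,t) = c^{2q} Σ_{j=0}^{q} C(q,j) ∂_x^{2(q−j)+1} ∂_y^{2j+α} u(0,0,t). -/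
/-- Partial derivative in the first (x) variable. -/
noncomputable def pdx (f : ℝ × ℝ × ℝ → ℝ) : ℝ × ℝ × ℝ → ℝ :=
  fun p => deriv (fun x => f (x, p.2.1, p.2.2)) p.1

/-- Partial derivative in the second (y) variable. -/
noncomputable def pdy (f : ℝ × ℝ × ℝ → ℝ) : ℝ × ℝ × ℝ → ℝ :=
  fun p => deriv (fun y => f (p.1, y, p.2.2)) p.2.1

/-- Partial derivative in the third (t) variable. -/
noncomputable def pdt (f : ℝ × ℝ × ℝ → ℝ) : ℝ × ℝ × ℝ → ℝ :=
  fun p => deriv (fun t => f (p.1, p.2.1, t)) p.2.2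

/-- Partial derivative in the first variable of a function of two variables. -/
noncomputable def pd1 (f : ℝ × ℝ → ℝ) : ℝ × ℝ → ℝ :=
  fun p => deriv (fun x => f (x, p.2)) p.1

/-- Partial derivative in the second variable of a function of two variables. -/
noncomputable def pd2 (f : ℝ × ℝ → ℝ) : ℝ × ℝ → ℝ :=
  fun p => deriv (fun y => f (p.1, y)) p.2

/-! ### Auxiliary machinery: directional derivatives via `fderiv` -/

/-- Directional derivative operator. -/
noncomputable def DD (v : ℝ × ℝ × ℝ) (f : ℝ × ℝ × ℝ → ℝ) : ℝ × ℝ × ℝ → ℝ :=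
  fun p => fderiv ℝ f p v

lemma DD_smooth {f : ℝ × ℝ × ℝ → ℝ} (hf : ContDiff ℝ (⊤ : ℕ∞) f) (v : ℝ × ℝ × ℝ) :
    ContDiff ℝ (⊤ : ℕ∞) (DD v f) :=
  (hf.fderiv_right (by simp)).clm_apply contDiff_const

lemma DD_iter_smooth {f : ℝ × ℝ × ℝ → ℝ} (hf : ContDiff ℝ (⊤ : ℕ∞) f) (v : ℝ × ℝ × ℝ) (n : ℕ) :
    ContDiff ℝ (⊤ : ℕ∞) ((DD v)^[n] f) := by
  induction n with
  | zero => exact hf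
  | succ n ih => rw [Function.iterate_succ_apply']; exact DD_smooth ih v

lemma DD_apply_snd {f : ℝ × ℝ × ℝ → ℝ} (hf : ContDiff ℝ (⊤ : ℕ∞) f) (v w p : ℝ × ℝ × ℝ) :
    DD v (DD w f) p = fderiv ℝ (fderiv ℝ f) p v w := by
  have h1 : HasFDerivAt (DD w f)
      ((ContinuousLinearMap.apply ℝ ℝ w).comp (fderiv ℝ (fderiv ℝ f) p)) p :=
    (ContinuousLinearMap.apply ℝ ℝ w).hasFDerivAt.comp p
      ((hf.fderiv_right (m := 1) (WithTop.coe_le_coe.mpr le_top)).differentiable one_ne_zero p).hasFDerivAt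
  show fderiv ℝ (DD w f) p v = _
  rw [h1.fderiv]
  rfl

lemma DD_comm {f : ℝ × ℝ × ℝ → ℝ} (hf : ContDiff ℝ (⊤ : ℕ∞) f) (v w : ℝ × ℝ × ℝ) :
    DD v (DD w f) = DD w (DD v f) := by
  funext p
  rw [DD_apply_snd hf, DD_apply_snd hf]
  exact second_derivative_symmetric (fun y => (hf.differentiable (by simp) y).hasFDerivAt)
    (((hf.fderiv_right (m := 1) (WithTop.coe_le_coe.mpr le_top)).differentiable one_ne_zero p).hasFDerivAt) v w

lemma DD_comm_iter {f : ℝ × ℝ × ℝ → ℝ} (hf : ContDiff ℝ (⊤ : ℕ∞) f) (v w : ℝ × ℝ × ℝ) (n : ℕ) :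
    DD v ((DD w)^[n] f) = (DD w)^[n] (DD v f) := by
  induction n with
  | zero => rfl
  | succ n ih =>
    rw [Function.iterate_succ_apply', DD_comm (DD_iter_smooth hf w n), ih]
    exact (Function.iterate_succ_apply' (DD w) n (DD v f)).symm

lemma DD_lin {f g : ℝ × ℝ × ℝ → ℝ} (hf : ContDiff ℝ (⊤ : ℕ∞) f) (hg : ContDiff ℝ (⊤ : ℕ∞) g)
    (a : ℝ) (v : ℝ × ℝ × ℝ) :
    DD v (fun p => a * (f p + g p)) = fun p => a * (DD v f p + DD v g p) := by
  funext p
  have hfd : DifferentiableAt ℝ f p := hf.differentiable (by simp) p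
  have hgd : DifferentiableAt ℝ g p := hg.differentiable (by simp) p
  show fderiv ℝ (fun p => a * (f p + g p)) p v = _
  rw [fderiv_const_mul (a := fun p => f p + g p) (hfd.add hgd),
    fderiv_fun_add hfd hgd]
  simp [DD]; ring

lemma DD_iter_lin {f g : ℝ × ℝ × ℝ → ℝ} (hf : ContDiff ℝ (⊤ : ℕ∞) f) (hg : ContDiff ℝ (⊤ : ℕ∞) g)
    (a : ℝ) (v : ℝ × ℝ × ℝ) (n : ℕ) :
    (DD v)^[n] (fun p => a * (f p + g p))
      = fun p => a * ((DD v)^[n] f p + (DD v)^[n] g p) := by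
  induction n with
  | zero => rfl
  | succ n ih =>
    rw [Function.iterate_succ_apply', ih,
      DD_lin (DD_iter_smooth hf v n) (DD_iter_smooth hg v n) a v,
      Function.iterate_succ_apply' (DD v) n f, Function.iterate_succ_apply' (DD v) n g]

/-- Unit directions. -/
noncomputable def ex : ℝ × ℝ × ℝ := (1, 0, 0)
noncomputable def ey : ℝ × ℝ × ℝ := (0, 1, 0)
noncomputable def et : ℝ × ℝ × ℝ := (0, 0, 1)

lemma pdx_eq {f : ℝ × ℝ × ℝ → ℝ} (hf : ContDiff ℝ (⊤ : ℕ∞) f) : pdx f = DD ex f := by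
  funext p
  have h1 : HasDerivAt (fun x : ℝ => ((x, p.2.1, p.2.2) : ℝ × ℝ × ℝ))
      ((1 : ℝ), (0 : ℝ), (0 : ℝ)) p.1 :=
    HasDerivAt.prodMk (hasDerivAt_id p.1) (HasDerivAt.prodMk (hasDerivAt_const _ _) (hasDerivAt_const _ _))
  have h2 := (hf.differentiable (by simp) (p.1, p.2.1, p.2.2)).hasFDerivAt.comp_hasDerivAt p.1 h1
  exact h2.deriv

lemma pdy_eq {f : ℝ × ℝ × ℝ → ℝ} (hf : ContDiff ℝ (⊤ : ℕ∞) f) : pdy f = DD ey f := by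
  funext p
  have h1 : HasDerivAt (fun y : ℝ => ((p.1, y, p.2.2) : ℝ × ℝ × ℝ))
      ((0 : ℝ), (1 : ℝ), (0 : ℝ)) p.2.1 :=
    HasDerivAt.prodMk (hasDerivAt_const _ _) (HasDerivAt.prodMk (hasDerivAt_id p.2.1) (hasDerivAt_const _ _))
  have h2 := (hf.differentiable (by simp) (p.1, p.2.1, p.2.2)).hasFDerivAt.comp_hasDerivAt p.2.1 h1
  exact h2.deriv

lemma pdt_eq {f : ℝ × ℝ × ℝ → ℝ} (hf : ContDiff ℝ (⊤ : ℕ∞) f) : pdt f = DD et f := by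
  funext p
  have h1 : HasDerivAt (fun t : ℝ => ((p.1, p.2.1, t) : ℝ × ℝ × ℝ))
      ((0 : ℝ), (0 : ℝ), (1 : ℝ)) p.2.2 :=
    HasDerivAt.prodMk (hasDerivAt_const _ _) (HasDerivAt.prodMk (hasDerivAt_const _ _) (hasDerivAt_id p.2.2))
  have h2 := (hf.differentiable (by simp) (p.1, p.2.1, p.2.2)).hasFDerivAt.comp_hasDerivAt p.2.2 h1
  exact h2.deriv

lemma pdx_iter_eq {f : ℝ × ℝ × ℝ → ℝ} (hf : ContDiff ℝ (⊤ : ℕ∞) f) (n : ℕ) :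
    pdx^[n] f = (DD ex)^[n] f := by
  induction n with
  | zero => rfl
  | succ n ih =>
    rw [Function.iterate_succ_apply', Function.iterate_succ_apply', ih,
      pdx_eq (DD_iter_smooth hf ex n)]

lemma pdy_iter_eq {f : ℝ × ℝ × ℝ → ℝ} (hf : ContDiff ℝ (⊤ : ℕ∞) f) (n : ℕ) :
    pdy^[n] f = (DD ey)^[n] f := by
  induction n with
  | zero => rfl
  | succ n ih =>
    rw [Function.iterate_succ_apply', Function.iterate_succ_apply', ih,
      pdy_eq (DD_iter_smooth hf ey n)]

lemma pdt_iter_eq {f : ℝ × ℝ × ℝ → ℝ} (hf : ContDiff ℝ (⊤ : ℕ∞) f) (n : ℕ) :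
    pdt^[n] f = (DD et)^[n] f := by
  induction n with
  | zero => rfl
  | succ n ih =>
    rw [Function.iterate_succ_apply', Function.iterate_succ_apply', ih,
      pdt_eq (DD_iter_smooth hf et n)]

/-- The wave equation propagates to directional derivatives. -/
lemma wave_prop {c : ℝ} {w : ℝ × ℝ × ℝ → ℝ} (hw : ContDiff ℝ (⊤ : ℕ∞) w)
    (h : ∀ p, DD et (DD et w) p = c ^ 2 * (DD ex (DD ex w) p + DD ey (DD ey w) p))
    (v : ℝ × ℝ × ℝ) :
    ∀ p, DD et (DD et (DD v w)) p
      = c ^ 2 * (DD ex (DD ex (DD v w)) p + DD ey (DD ey (DD v w)) p) := by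
  intro p
  have h1 : DD et (DD et (DD v w)) = DD v (DD et (DD et w)) := by
    rw [DD_comm hw et v, DD_comm (DD_smooth hw et) et v]
  have h2 : DD v (DD et (DD et w))
      = fun p => c ^ 2 * (DD v (DD ex (DD ex w)) p + DD v (DD ey (DD ey w)) p) := by
    rw [funext h, DD_lin (DD_smooth (DD_smooth hw ex) ex) (DD_smooth (DD_smooth hw ey) ey)]
  have h3 : DD v (DD ex (DD ex w)) = DD ex (DD ex (DD v w)) := by
    rw [DD_comm (DD_smooth hw ex) v ex, DD_comm hw v ex]
  have h4 : DD v (DD ey (DD ey w)) = DD ey (DD ey (DD v w)) := by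
    rw [DD_comm (DD_smooth hw ey) v ey, DD_comm hw v ey]
  rw [h1, h2]
  rw [h3, h4]

lemma wave_prop_iter {c : ℝ} {w : ℝ × ℝ × ℝ → ℝ} (hw : ContDiff ℝ (⊤ : ℕ∞) w)
    (h : ∀ p, DD et (DD et w) p = c ^ 2 * (DD ex (DD ex w) p + DD ey (DD ey w) p))
    (v : ℝ × ℝ × ℝ) (n : ℕ) :
    ∀ p, DD et (DD et ((DD v)^[n] w)) p
      = c ^ 2 * (DD ex (DD ex ((DD v)^[n] w)) p + DD ey (DD ey ((DD v)^[n] w)) p) := by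
  induction n with
  | zero => exact h
  | succ n ih =>
    rw [Function.iterate_succ_apply']
    exact wave_prop (DD_iter_smooth hw v n) ih v

lemma pascal_sum (q : ℕ) (E : ℕ → ℕ → ℝ) :
    ∑ j ∈ Finset.range (q + 2), ((q + 1).choose j : ℝ) * E (2 * (q + 1 - j)) (2 * j)
      = ∑ j ∈ Finset.range (q + 1),
          (q.choose j : ℝ) * (E (2 * (q - j) + 2) (2 * j) + E (2 * (q - j)) (2 * j + 2)) := by
  rw [Finset.sum_range_succ']
  have h1 : ∀ j ∈ Finset.range (q + 1),
      (((q + 1).choose (j + 1) : ℕ) : ℝ) * E (2 * (q + 1 - (j + 1))) (2 * (j + 1))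
        = (q.choose j : ℝ) * E (2 * (q - j)) (2 * j + 2)
          + (q.choose (j + 1) : ℝ) * E (2 * (q - j)) (2 * j + 2) := by
    intro j hj
    have e1 : q + 1 - (j + 1) = q - j := by omega
    have e2 : 2 * (j + 1) = 2 * j + 2 := by ring
    rw [e1, e2, Nat.choose_succ_succ, Nat.cast_add, add_mul]
  rw [Finset.sum_congr rfl h1, Finset.sum_add_distrib]
  have h2 : ∑ j ∈ Finset.range (q + 1),
      (q.choose (j + 1) : ℝ) * E (2 * (q - j)) (2 * j + 2)
        + (((q + 1).choose 0 : ℕ) : ℝ) * E (2 * (q + 1 - 0)) (2 * 0)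
      = ∑ j ∈ Finset.range (q + 1), (q.choose j : ℝ) * E (2 * (q - j) + 2) (2 * j) := by
    rw [Finset.sum_range_succ (f := fun j => (q.choose (j + 1) : ℝ) * E (2 * (q - j)) (2 * j + 2))]
    rw [Finset.sum_range_succ' (f := fun j => (q.choose j : ℝ) * E (2 * (q - j) + 2) (2 * j))]
    have hz : q.choose (q + 1) = 0 := Nat.choose_eq_zero_of_lt (by omega)
    rw [hz]
    congr 1
    · simp only [Nat.cast_zero, zero_mul, add_zero]
      apply Finset.sum_congr rfl
      intro j hj
      have hjq : j < q := Finset.mem_range.mp hj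
      have e1 : 2 * (q - j) = 2 * (q - (j + 1)) + 2 := by omega
      have e2 : 2 * j + 2 = 2 * (j + 1) := by ring
      rw [e1, e2]
    · have e1 : 2 * (q + 1 - 0) = 2 * (q - 0) + 2 := by omega
      rw [e1]
      simp
  simp only [mul_add, Finset.sum_add_distrib]
  rw [add_assoc, h2, add_comm]

/-- Main induction: iterated time derivatives via the wave equation. -/
lemma key_wave {c : ℝ} : ∀ (q : ℕ) (w : ℝ × ℝ × ℝ → ℝ), ContDiff ℝ (⊤ : ℕ∞) w →
    (∀ p, DD et (DD et w) p = c ^ 2 * (DD ex (DD ex w) p + DD ey (DD ey w) p)) →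
    ∀ p, ((DD et)^[2 * q] w) p
      = c ^ (2 * q) * ∑ j ∈ Finset.range (q + 1),
          (q.choose j : ℝ) * ((DD ex)^[2 * (q - j)] ((DD ey)^[2 * j] w)) p := by
  intro q
  induction q with
  | zero => intro w hw hwv p; simp
  | succ q ih =>
    intro w hw hwv p
    have hw2 : ContDiff ℝ (⊤ : ℕ∞) (DD et (DD et w)) := DD_smooth (DD_smooth hw et) et
    have hwv2 : ∀ p, DD et (DD et (DD et (DD et w))) p
        = c ^ 2 * (DD ex (DD ex (DD et (DD et w))) p + DD ey (DD ey (DD et (DD et w))) p) :=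
      wave_prop (DD_smooth hw et) (wave_prop hw hwv et) et
    have h2 : ((DD et)^[2 * (q + 1)] w) p = ((DD et)^[2 * q] (DD et (DD et w))) p := by
      have h : 2 * (q + 1) = 2 * q + 2 := by ring
      rw [h, Function.iterate_add_apply]
      rfl
    rw [h2, ih _ hw2 hwv2]
    have hA : ContDiff ℝ (⊤ : ℕ∞) (DD ex (DD ex w)) := DD_smooth (DD_smooth hw ex) ex
    have hB : ContDiff ℝ (⊤ : ℕ∞) (DD ey (DD ey w)) := DD_smooth (DD_smooth hw ey) ey
    have hterm : ∀ j ∈ Finset.range (q + 1),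
        (q.choose j : ℝ) * ((DD ex)^[2 * (q - j)] ((DD ey)^[2 * j] (DD et (DD et w)))) p
        = (q.choose j : ℝ) * (c ^ 2 *
            (((DD ex)^[2 * (q - j) + 2] ((DD ey)^[2 * j] w)) p
              + ((DD ex)^[2 * (q - j)] ((DD ey)^[2 * j + 2] w)) p)) := by
      intro j hj
      have e0 : DD et (DD et w)
          = fun p => c ^ 2 * (DD ex (DD ex w) p + DD ey (DD ey w) p) := funext hwv
      rw [e0, DD_iter_lin hA hB (c ^ 2) ey (2 * j),
        DD_iter_lin (DD_iter_smooth hA ey (2 * j)) (DD_iter_smooth hB ey (2 * j))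
          (c ^ 2) ex (2 * (q - j))]
      simp only []
      have hx1 : DD ex (DD ex ((DD ey)^[2 * j] w))
          = (DD ey)^[2 * j] (DD ex (DD ex w)) := by
        rw [DD_comm_iter hw ex ey (2 * j), DD_comm_iter (DD_smooth hw ex) ex ey (2 * j)]
      have hy1 : (DD ey)^[2 * j] (DD ey (DD ey w)) = (DD ey)^[2 * j + 2] w := by
        rw [Function.iterate_add_apply]
        rfl
      have hx2 : (DD ex)^[2 * (q - j) + 2] ((DD ey)^[2 * j] w)
          = (DD ex)^[2 * (q - j)] (DD ex (DD ex ((DD ey)^[2 * j] w))) := by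
        rw [Function.iterate_add_apply]
        rfl
      rw [← hx1, hy1, hx2]
    rw [Finset.sum_congr rfl hterm]
    have hp := pascal_sum q (fun a b => ((DD ex)^[a] ((DD ey)^[b] w)) p)
    rw [hp]
    rw [show 2 * (q + 1) = 2 * q + 2 from by ring, pow_add, Finset.mul_sum, Finset.mul_sum]
    apply Finset.sum_congr rfl
    intro j hj
    ring

lemma DD_iter_iter_comm {f : ℝ × ℝ × ℝ → ℝ} (hf : ContDiff ℝ (⊤ : ℕ∞) f) (v w : ℝ × ℝ × ℝ)
    (m n : ℕ) : (DD v)^[m] ((DD w)^[n] f) = (DD w)^[n] ((DD v)^[m] f) := by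
  induction m with
  | zero => rfl
  | succ m ih =>
    rw [Function.iterate_succ_apply', ih, DD_comm_iter (DD_iter_smooth hf v m) v w n,
      Function.iterate_succ_apply' (DD v) m f]

lemma tr1_iter (F : ℝ × ℝ × ℝ → ℝ) (n : ℕ) :
    pd1^[n] (fun p : ℝ × ℝ => F (p.1, 0, p.2)) = fun p : ℝ × ℝ => (pdx^[n] F) (p.1, 0, p.2) := by
  induction n generalizing F with
  | zero => rfl
  | succ n ih =>
    rw [Function.iterate_succ_apply]
    have h : pd1 (fun p : ℝ × ℝ => F (p.1, 0, p.2))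
        = fun p : ℝ × ℝ => pdx F (p.1, 0, p.2) := rfl
    rw [h, ih (pdx F), Function.iterate_succ_apply pdx n F]

lemma tr2_iter (F : ℝ × ℝ × ℝ → ℝ) (n : ℕ) :
    pd2^[n] (fun p : ℝ × ℝ => F (p.1, 0, p.2)) = fun p : ℝ × ℝ => (pdt^[n] F) (p.1, 0, p.2) := by
  induction n generalizing F with
  | zero => rfl
  | succ n ih =>
    rw [Function.iterate_succ_apply]
    have h : pd2 (fun p : ℝ × ℝ => F (p.1, 0, p.2))
        = fun p : ℝ × ℝ => pdt F (p.1, 0, p.2) := rfl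
    rw [h, ih (pdt F), Function.iterate_succ_apply pdt n F]

lemma tr1'_iter (F : ℝ × ℝ × ℝ → ℝ) (n : ℕ) :
    pd1^[n] (fun p : ℝ × ℝ => F (0, p.1, p.2)) = fun p : ℝ × ℝ => (pdy^[n] F) (0, p.1, p.2) := by
  induction n generalizing F with
  | zero => rfl
  | succ n ih =>
    rw [Function.iterate_succ_apply]
    have h : pd1 (fun p : ℝ × ℝ => F (0, p.1, p.2))
        = fun p : ℝ × ℝ => pdy F (0, p.1, p.2) := rfl
    rw [h, ih (pdy F), Function.iterate_succ_apply pdy n F]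

lemma tr2'_iter (F : ℝ × ℝ × ℝ → ℝ) (n : ℕ) :
    pd2^[n] (fun p : ℝ × ℝ => F (0, p.1, p.2)) = fun p : ℝ × ℝ => (pdt^[n] F) (0, p.1, p.2) := by
  induction n generalizing F with
  | zero => rfl
  | succ n ih =>
    rw [Function.iterate_succ_apply]
    have h : pd2 (fun p : ℝ × ℝ => F (0, p.1, p.2))
        = fun p : ℝ × ℝ => pdt F (0, p.1, p.2) := rfl
    rw [h, ih (pdt F), Function.iterate_succ_apply pdt n F]

theorem neumann_neumann_corner_cbc
    (c : ℝ) (u : ℝ × ℝ × ℝ → ℝ) (hu : ContDiff ℝ (⊤ : ℕ∞) u)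
    (hwave : ∀ p : ℝ × ℝ × ℝ,
      pdt (pdt u) p = c ^ 2 * (pdx (pdx u) p + pdy (pdy u) p))
    (g₁ g₂ : ℝ × ℝ → ℝ)
    (hg₁ : g₁ = fun p : ℝ × ℝ => pdy u (p.1, 0, p.2))
    (hg₂ : g₂ = fun p : ℝ × ℝ => pdx u (0, p.1, p.2)) :
    ∀ (q α : ℕ) (t : ℝ),
      (pd2^[2 * q] (pd1^[α] g₁)) (0, t)
        = c ^ (2 * q) * ∑ j ∈ Finset.range (q + 1),
            (q.choose j : ℝ) * (pdx^[2 * (q - j) + α] (pdy^[2 * j + 1] u)) (0, 0, t)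
      ∧
      (pd2^[2 * q] (pd1^[α] g₂)) (0, t)
        = c ^ (2 * q) * ∑ j ∈ Finset.range (q + 1),
            (q.choose j : ℝ) * (pdx^[2 * (q - j) + 1] (pdy^[2 * j + α] u)) (0, 0, t) := by
  intro q α t
  have hDyu : ContDiff ℝ (⊤ : ℕ∞) (DD ey u) := DD_smooth hu ey
  have hDxu : ContDiff ℝ (⊤ : ℕ∞) (DD ex u) := DD_smooth hu ex
  have hwD : ∀ p, DD et (DD et u) p = c ^ 2 * (DD ex (DD ex u) p + DD ey (DD ey u) p) := by
    intro p
    have e1 : pdt (pdt u) = DD et (DD et u) := by rw [pdt_eq hu, pdt_eq (DD_smooth hu et)]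
    have e2 : pdx (pdx u) = DD ex (DD ex u) := by rw [pdx_eq hu, pdx_eq (DD_smooth hu ex)]
    have e3 : pdy (pdy u) = DD ey (DD ey u) := by rw [pdy_eq hu, pdy_eq (DD_smooth hu ey)]
    rw [← e1, ← e2, ← e3]; exact hwave p
  constructor
  · -- first part
    have hw1 : ContDiff ℝ (⊤ : ℕ∞) ((DD ex)^[α] (DD ey u)) := DD_iter_smooth hDyu ex α
    have hwv1 := wave_prop_iter hDyu (wave_prop hu hwD ey) ex α
    have L1 : (pd2^[2 * q] (pd1^[α] g₁)) (0, t)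
        = (pdt^[2 * q] (pdx^[α] (pdy u))) ((0 : ℝ), (0 : ℝ), t) := by
      rw [hg₁, tr1_iter (pdy u) α, tr2_iter (pdx^[α] (pdy u)) (2 * q)]
    have L2 : pdt^[2 * q] (pdx^[α] (pdy u)) = (DD et)^[2 * q] ((DD ex)^[α] (DD ey u)) := by
      rw [pdy_eq hu, pdx_iter_eq hDyu α, pdt_iter_eq hw1 (2 * q)]
    rw [L1, L2, key_wave q _ hw1 hwv1 ((0 : ℝ), (0 : ℝ), t)]
    congr 1
    apply Finset.sum_congr rfl
    intro j hj
    congr 1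
    have d1 : (DD ey)^[2 * j] ((DD ex)^[α] (DD ey u))
        = (DD ex)^[α] ((DD ey)^[2 * j + 1] u) := by
      rw [DD_iter_iter_comm hDyu ey ex (2 * j) α, ← Function.iterate_succ_apply]
    rw [pdy_iter_eq hu (2 * j + 1),
      pdx_iter_eq (DD_iter_smooth hu ey (2 * j + 1)) (2 * (q - j) + α), d1,
      Function.iterate_add_apply (DD ex) (2 * (q - j)) α]
  · -- second part
    have hw2 : ContDiff ℝ (⊤ : ℕ∞) ((DD ey)^[α] (DD ex u)) := DD_iter_smooth hDxu ey α
    have hwv2 := wave_prop_iter hDxu (wave_prop hu hwD ex) ey α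
    have L1 : (pd2^[2 * q] (pd1^[α] g₂)) (0, t)
        = (pdt^[2 * q] (pdy^[α] (pdx u))) ((0 : ℝ), (0 : ℝ), t) := by
      rw [hg₂, tr1'_iter (pdx u) α, tr2'_iter (pdy^[α] (pdx u)) (2 * q)]
    have L2 : pdt^[2 * q] (pdy^[α] (pdx u)) = (DD et)^[2 * q] ((DD ey)^[α] (DD ex u)) := by
      rw [pdx_eq hu, pdy_iter_eq hDxu α, pdt_iter_eq hw2 (2 * q)]
    rw [L1, L2, key_wave q _ hw2 hwv2 ((0 : ℝ), (0 : ℝ), t)]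
    congr 1
    apply Finset.sum_congr rfl
    intro j hj
    congr 1
    have d1 : (DD ey)^[2 * j] ((DD ey)^[α] (DD ex u))
        = DD ex ((DD ey)^[2 * j + α] u) := by
      rw [← Function.iterate_add_apply (DD ey) (2 * j) α,
        ← DD_comm_iter hu ex ey (2 * j + α)]
    rw [pdy_iter_eq hu (2 * j + α),
      pdx_iter_eq (DD_iter_smooth hu ey (2 * j + α)) (2 * (q - j) + 1), d1,
      ← Function.iterate_succ_apply (DD ex) (2 * (q - j)) ((DD ey)^[2 * j + α] u)]
end

section
/- Let c ∈ ℝ. For all natural numbers q ≤ m and α ≤ 2m+1, applying the operator c^{2q} ∂_x^α Δ^q to the tensor-product Taylor polynomial p and evaluating at the center gives c^{2q} ∂_x^α Δ^q p(x_i, y_j) = c^{2q} Σ_{j} C(q,j) · (2(q−j)+α)!/Δx^{2(q−j)+α} · (2j)!/Δy^{2j} · c_{2(q−j)+α, 2j}, where the sum runs over 0 ≤ j ≤ q with 2(q−j)+α ≤ 2m+1. -/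
open Finset

/-- The Laplacian Δ = ∂_x² + ∂_y². -/
noncomputable def lapl2 (f : ℝ × ℝ → ℝ) : ℝ × ℝ → ℝ :=
  fun p => pd1 (pd1 f) p + pd2 (pd2 f) p

/-- The tensor-product Taylor polynomial
p(x,y) = Σ_{l₁=0}^{2m+1} Σ_{l₂=0}^{2m+1} c_{l₁,l₂} ((x−xᵢ)/Δx)^{l₁} ((y−yⱼ)/Δy)^{l₂}. -/
noncomputable def taylorPoly (m : ℕ) (xi yj dx dy : ℝ) (co : ℕ → ℕ → ℝ) : ℝ × ℝ → ℝ :=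
  fun p => ∑ l₁ ∈ Finset.range (2 * m + 2), ∑ l₂ ∈ Finset.range (2 * m + 2),
    co l₁ l₂ * ((p.1 - xi) / dx) ^ l₁ * ((p.2 - yj) / dy) ^ l₂

/-!
On polynomials `∑ d l₁ l₂ X^l₁ Y^l₂` with `X = (x - xᵢ)/Δx`, `Y = (y - yⱼ)/Δy`, the partial
derivatives act on the coefficient array `d` by the commuting shifts
`Dₓ d l₁ l₂ = (l₁ + 1)/Δx · d (l₁ + 1) l₂` and `D_y d l₁ l₂ = (l₂ + 1)/Δy · d l₁ (l₂ + 1)`,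
provided `d` vanishes outside the box `[0, 2m+1]²` summed over by `taylorPoly` (otherwise the shift
would bring in a coefficient the polynomial does not contain). The shifts preserve this property,
and `co` may first be truncated to the box. So `∂ₓ^α Δ^q p` has coefficients
`Dₓ^α (Dₓ² + D_y²)^q d`, its value at the centre is the `(0, 0)` coefficient, and the binomial
theorem for the commuting `Dₓ², D_y²` with `(D_y^b Dₓ^a d) 0 0 = b!/Δy^b · a!/Δx^a · d a b` gives
the sum; the terms with `2(q - j) + α > 2m + 1` vanish because the truncated array does.
-/

theorem Function.iterate_apply_eq_of_semiconj_on {α β : Type*} {F : β → β} {T : α → α} {P : α → β}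
    {S : Set α} (hT : Set.MapsTo T S S) (hF : ∀ d ∈ S, F (P d) = P (T d)) (n : ℕ) {d : α}
    (hd : d ∈ S) : F^[n] (P d) = P (T^[n] d) := by
  induction n generalizing d with
  | zero => rfl
  | succ n ih => rw [Function.iterate_succ_apply, hF d hd, ih (hT hd), Function.iterate_succ_apply]

theorem hasDerivAt_sum_range_mul_div_pow (N : ℕ) (g : ℕ → ℝ) (a c t : ℝ) (hg : g N = 0) :
    HasDerivAt (fun x => ∑ l ∈ range N, g l * ((x - a) / c) ^ l)
      (∑ l ∈ range N, ((l : ℝ) + 1) / c * g (l + 1) * ((t - a) / c) ^ l) t := by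
  have hlin : HasDerivAt (fun x : ℝ => (x - a) / c) (1 / c) t := by
    simpa using ((hasDerivAt_id t).sub_const a).div_const c
  refine (HasDerivAt.fun_sum fun l (_ : l ∈ range N) =>
    (hlin.fun_pow l).const_mul (g l)).congr_deriv ?_
  cases N with
  | zero => simp
  | succ n =>
    rw [sum_range_succ', sum_range_succ, hg]
    simp only [Nat.cast_zero, zero_mul, mul_zero, add_zero, Nat.add_sub_cancel, Nat.cast_succ]
    exact sum_congr rfl fun l _ => by ring

noncomputable def coeffDerivX (dx : ℝ) : Module.End ℝ (ℕ → ℕ → ℝ) where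
  toFun d l₁ l₂ := ((l₁ : ℝ) + 1) / dx * d (l₁ + 1) l₂
  map_add' d e := by funext l₁ l₂; simp only [Pi.add_apply, mul_add]
  map_smul' r d := by funext l₁ l₂; simp only [Pi.smul_apply, smul_eq_mul, RingHom.id_apply]; ring

noncomputable def coeffDerivY (dy : ℝ) : Module.End ℝ (ℕ → ℕ → ℝ) where
  toFun d l₁ l₂ := ((l₂ : ℝ) + 1) / dy * d l₁ (l₂ + 1)
  map_add' d e := by funext l₁ l₂; simp only [Pi.add_apply, mul_add]
  map_smul' r d := by funext l₁ l₂; simp only [Pi.smul_apply, smul_eq_mul, RingHom.id_apply]; ring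

noncomputable def coeffLaplacian (dx dy : ℝ) : Module.End ℝ (ℕ → ℕ → ℝ) :=
  coeffDerivX dx ^ 2 + coeffDerivY dy ^ 2

def boxSupported (N : ℕ) : Set (ℕ → ℕ → ℝ) :=
  {d | ∀ l₁ l₂, N ≤ l₁ ∨ N ≤ l₂ → d l₁ l₂ = 0}

theorem mapsTo_coeffDerivX_boxSupported (N : ℕ) (dx : ℝ) :
    Set.MapsTo (coeffDerivX dx) (boxSupported N) (boxSupported N) := fun d hd l₁ l₂ h => by
  simp [coeffDerivX, hd (l₁ + 1) l₂ (by omega)]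

theorem mapsTo_coeffDerivY_boxSupported (N : ℕ) (dy : ℝ) :
    Set.MapsTo (coeffDerivY dy) (boxSupported N) (boxSupported N) := fun d hd l₁ l₂ h => by
  simp [coeffDerivY, hd l₁ (l₂ + 1) (by omega)]

theorem mapsTo_coeffLaplacian_boxSupported (N : ℕ) (dx dy : ℝ) :
    Set.MapsTo (coeffLaplacian dx dy) (boxSupported N) (boxSupported N) :=
  fun d hd l₁ l₂ h => by
    have hx := mapsTo_coeffDerivX_boxSupported N dx (mapsTo_coeffDerivX_boxSupported N dx hd)
    have hy := mapsTo_coeffDerivY_boxSupported N dy (mapsTo_coeffDerivY_boxSupported N dy hd)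
    simp [coeffLaplacian, sq, hx l₁ l₂ h, hy l₁ l₂ h]

theorem taylorPoly_add (m : ℕ) (xi yj dx dy : ℝ) (d e : ℕ → ℕ → ℝ) :
    taylorPoly m xi yj dx dy (d + e) = taylorPoly m xi yj dx dy d + taylorPoly m xi yj dx dy e := by
  funext p
  simp only [taylorPoly, Pi.add_apply, add_mul, sum_add_distrib]

theorem taylorPoly_apply_swap (m : ℕ) (xi yj dx dy : ℝ) (d : ℕ → ℕ → ℝ) (p : ℝ × ℝ) :
    taylorPoly m xi yj dx dy d p = taylorPoly m yj xi dy dx (fun l₂ l₁ => d l₁ l₂) p.swap := by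
  simp only [taylorPoly, Prod.fst_swap, Prod.snd_swap]
  rw [sum_comm]
  exact sum_congr rfl fun _ _ => sum_congr rfl fun _ _ => by ring

theorem taylorPoly_center (m : ℕ) (xi yj dx dy : ℝ) (d : ℕ → ℕ → ℝ) :
    taylorPoly m xi yj dx dy d (xi, yj) = d 0 0 := by
  simp [taylorPoly, zero_pow_eq]

section

variable {m : ℕ} {xi yj dx dy : ℝ} {d : ℕ → ℕ → ℝ}

theorem pd1_taylorPoly (hd : d ∈ boxSupported (2 * m + 2)) :
    pd1 (taylorPoly m xi yj dx dy d) = taylorPoly m xi yj dx dy (coeffDerivX dx d) := by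
  funext p
  set g : ℕ → ℝ := fun l₁ => ∑ l₂ ∈ range (2 * m + 2), d l₁ l₂ * ((p.2 - yj) / dy) ^ l₂
  have hg : g (2 * m + 2) = 0 := sum_eq_zero fun l₂ _ => by simp [hd _ l₂ (Or.inl le_rfl)]
  have hslice : (fun x => taylorPoly m xi yj dx dy d (x, p.2))
      = fun x => ∑ l₁ ∈ range (2 * m + 2), g l₁ * ((x - xi) / dx) ^ l₁ := by
    funext x
    exact sum_congr rfl fun l₁ _ => by rw [sum_mul]; exact sum_congr rfl fun _ _ => by ring
  rw [pd1, hslice, (hasDerivAt_sum_range_mul_div_pow _ g xi dx p.1 hg).deriv]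
  refine sum_congr rfl fun l₁ _ => ?_
  rw [mul_sum, sum_mul]
  exact sum_congr rfl fun l₂ _ => by
    simp only [coeffDerivX, LinearMap.coe_mk, AddHom.coe_mk]
    ring

theorem pd2_taylorPoly (hd : d ∈ boxSupported (2 * m + 2)) :
    pd2 (taylorPoly m xi yj dx dy d) = taylorPoly m xi yj dx dy (coeffDerivY dy d) := by
  funext p
  have hdT : (fun l₂ l₁ => d l₁ l₂) ∈ boxSupported (2 * m + 2) := fun l₂ l₁ h => hd l₁ l₂ h.symm
  calc pd2 (taylorPoly m xi yj dx dy d) p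
      = pd1 (taylorPoly m yj xi dy dx fun l₂ l₁ => d l₁ l₂) p.swap := by
        simp only [pd2, pd1, taylorPoly_apply_swap m xi yj, Prod.swap]
    _ = taylorPoly m xi yj dx dy (coeffDerivY dy d) p := by
        rw [pd1_taylorPoly hdT, taylorPoly_apply_swap, Prod.swap_swap]
        rfl

theorem lapl2_taylorPoly (hd : d ∈ boxSupported (2 * m + 2)) :
    lapl2 (taylorPoly m xi yj dx dy d)
      = taylorPoly m xi yj dx dy (coeffLaplacian dx dy d) := by
  funext p
  rw [lapl2, pd1_taylorPoly hd, pd1_taylorPoly (mapsTo_coeffDerivX_boxSupported _ dx hd),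
    pd2_taylorPoly hd, pd2_taylorPoly (mapsTo_coeffDerivY_boxSupported _ dy hd),
    coeffLaplacian, LinearMap.add_apply, taylorPoly_add]
  rfl

theorem iterate_pd1_iterate_lapl2_taylorPoly (hd : d ∈ boxSupported (2 * m + 2)) (a q : ℕ) :
    pd1^[a] (lapl2^[q] (taylorPoly m xi yj dx dy d)) = taylorPoly m xi yj dx dy
      ((coeffDerivX dx ^ a * coeffLaplacian dx dy ^ q) d) := by
  have hL := mapsTo_coeffLaplacian_boxSupported (2 * m + 2) dx dy
  rw [Function.iterate_apply_eq_of_semiconj_on hL (fun _ => lapl2_taylorPoly) q hd,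
    Function.iterate_apply_eq_of_semiconj_on (mapsTo_coeffDerivX_boxSupported _ dx)
      (fun _ => pd1_taylorPoly) a (hL.iterate q hd),
    Module.End.mul_apply, Module.End.pow_apply, Module.End.pow_apply]

end

theorem commute_coeffDerivX_coeffDerivY (dx dy : ℝ) : Commute (coeffDerivX dx) (coeffDerivY dy) :=
  LinearMap.ext fun d => by
    funext l₁ l₂
    simp only [Module.End.mul_apply, coeffDerivX, coeffDerivY, LinearMap.coe_mk, AddHom.coe_mk]
    ring

theorem coeffDerivX_pow_apply_zero (dx : ℝ) (a : ℕ) (d : ℕ → ℕ → ℝ) (l₂ : ℕ) :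
    (coeffDerivX dx ^ a) d 0 l₂ = a.factorial / dx ^ a * d a l₂ := by
  induction a generalizing d with
  | zero => simp
  | succ n ih =>
    rw [pow_succ, Module.End.mul_apply, ih, Nat.factorial_succ]
    simp only [coeffDerivX, LinearMap.coe_mk, AddHom.coe_mk]
    push_cast
    ring

theorem coeffDerivY_pow_apply_zero (dy : ℝ) (b : ℕ) (d : ℕ → ℕ → ℝ) (l₁ : ℕ) :
    (coeffDerivY dy ^ b) d l₁ 0 = b.factorial / dy ^ b * d l₁ b := by
  induction b generalizing d with
  | zero => simp
  | succ n ih =>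
    rw [pow_succ, Module.End.mul_apply, ih, Nat.factorial_succ]
    simp only [coeffDerivY, LinearMap.coe_mk, AddHom.coe_mk]
    push_cast
    ring

theorem coeffDerivX_pow_mul_coeffLaplacian_pow_apply_zero (dx dy : ℝ) (a q : ℕ)
    (d : ℕ → ℕ → ℝ) :
    ((coeffDerivX dx ^ a * coeffLaplacian dx dy ^ q) d) 0 0
      = ∑ j ∈ range (q + 1), (q.choose j : ℝ) *
          (((2 * (q - j) + a).factorial : ℝ) / dx ^ (2 * (q - j) + a)) *
          (((2 * j).factorial : ℝ) / dy ^ (2 * j)) * d (2 * (q - j) + a) (2 * j) := by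
  have hc := commute_coeffDerivX_coeffDerivY dx dy
  have hword (j : ℕ) (C : Module.End ℝ (ℕ → ℕ → ℝ)) :
      coeffDerivX dx ^ a * ((coeffDerivY dy ^ 2) ^ j * (coeffDerivX dx ^ 2) ^ (q - j) * C)
        = coeffDerivY dy ^ (2 * j) * (coeffDerivX dx ^ (2 * (q - j) + a) * C) := by
    rw [← pow_mul, ← pow_mul, mul_assoc, (hc.pow_pow a (2 * j)).left_comm,
      ← mul_assoc (coeffDerivX dx ^ a), ← pow_add, add_comm a]
  rw [coeffLaplacian, add_comm, (hc.symm.pow_pow 2 2).add_pow, mul_sum, LinearMap.sum_apply,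
    Finset.sum_apply, Finset.sum_apply]
  refine sum_congr rfl fun j _ => ?_
  rw [hword, Module.End.mul_apply, Module.End.mul_apply, coeffDerivY_pow_apply_zero,
    Module.End.natCast_apply, map_nsmul, Pi.smul_apply, Pi.smul_apply, nsmul_eq_mul,
    coeffDerivX_pow_apply_zero]
  ring

def boxTruncate (N : ℕ) (co : ℕ → ℕ → ℝ) : ℕ → ℕ → ℝ :=
  fun l₁ l₂ => if l₁ < N ∧ l₂ < N then co l₁ l₂ else 0

theorem boxTruncate_mem_boxSupported (N : ℕ) (co : ℕ → ℕ → ℝ) :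
    boxTruncate N co ∈ boxSupported N :=
  fun _ _ h => if_neg (by omega)

theorem taylorPoly_boxTruncate (m : ℕ) (xi yj dx dy : ℝ) (co : ℕ → ℕ → ℝ) :
    taylorPoly m xi yj dx dy (boxTruncate (2 * m + 2) co) = taylorPoly m xi yj dx dy co := by
  funext p
  refine sum_congr rfl fun l₁ h₁ => sum_congr rfl fun l₂ h₂ => ?_
  rw [boxTruncate, if_pos ⟨mem_range.1 h₁, mem_range.1 h₂⟩]

theorem dirichlet_corner_hermite_cbc_formula_general
    (m : ℕ) (xi yj dx dy : ℝ) (co : ℕ → ℕ → ℝ)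
    (c : ℝ) :
    ∀ q α : ℕ, q ≤ m → α ≤ 2 * m + 1 →
      c ^ (2 * q) *
        (pd1^[α] (lapl2^[q] (taylorPoly m xi yj dx dy co))) (xi, yj)
      = c ^ (2 * q) *
          ∑ j ∈ (Finset.range (q + 1)).filter (fun j => 2 * (q - j) + α ≤ 2 * m + 1),
            (q.choose j : ℝ) *
              (((2 * (q - j) + α).factorial : ℝ) / dx ^ (2 * (q - j) + α)) *
              (((2 * j).factorial : ℝ) / dy ^ (2 * j)) *
              co (2 * (q - j) + α) (2 * j) := by
  intro q α hq _
  rw [← taylorPoly_boxTruncate,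
    iterate_pd1_iterate_lapl2_taylorPoly (boxTruncate_mem_boxSupported _ co), taylorPoly_center,
    coeffDerivX_pow_mul_coeffLaplacian_pow_apply_zero, sum_filter]
  congr 1
  refine sum_congr rfl fun j hj => ?_
  have h2j : 2 * j < 2 * m + 2 := by have := mem_range.1 hj; omega
  split_ifs with hbox
  · rw [boxTruncate, if_pos ⟨by omega, h2j⟩]
  · rw [boxTruncate, if_neg (by omega), mul_zero]

theorem dirichlet_corner_hermite_cbc_formula
    (m : ℕ) (xi yj dx dy : ℝ) (hdx : dx ≠ 0) (hdy : dy ≠ 0) (co : ℕ → ℕ → ℝ)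
    (c : ℝ) :
    ∀ q α : ℕ, q ≤ m → α ≤ 2 * m + 1 →
      c ^ (2 * q) *
        (pd1^[α] (lapl2^[q] (taylorPoly m xi yj dx dy co))) (xi, yj)
      = c ^ (2 * q) *
          ∑ j ∈ (Finset.range (q + 1)).filter (fun j => 2 * (q - j) + α ≤ 2 * m + 1),
            (q.choose j : ℝ) *
              (((2 * (q - j) + α).factorial : ℝ) / dx ^ (2 * (q - j) + α)) *
              (((2 * j).factorial : ℝ) / dy ^ (2 * j)) *
              co (2 * (q - j) + α) (2 * j) :=
  dirichlet_corner_hermite_cbc_formula_general m xi yj dx dy co c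
end
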